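/- Let M be a loopless matroid on a finite linearly ordered ground set E and B a building set for M. If N and N′ are inclusion-maximal nested sets with equal NL-labelings, m(N) = m(N′) as sequences of atoms, then N = N′. In particular, every inclusion-maximal nested set is uniquely reconstructible from its NL-labeling. -/

import Mathlib

open Set Matroid
open scoped Matroid

variable {α : Type*}

/-- Two sets are incomparable under inclusion. -/
def Incomp (X Y : Set α) : Prop := ¬ X ⊆ Y ∧ ¬ Y ⊆ X

/-- The inclusion-maximal elements of a family of sets. -/
def maxB (B : Set (Set α)) : Set (Set α) := {X ∈ B | ∀ Y ∈ B, X ⊆ Y → X = Y}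

/-- The rank of a set in a matroid: the largest size of an independent subset. -/
noncomputable def mrank (M : Matroid α) (X : Set α) : ℕ :=
  sSup {n : ℕ | ∃ I ⊆ X, M.Indep I ∧ I.ncard = n}

/-- A matroid is loopless if every singleton of the ground set is independent. -/
def MLoopless (M : Matroid α) : Prop := ∀ e ∈ M.E, M.Indep {e}

/-- A matroid is connected if its rank function is not additive over any
separation of the ground set into two nonempty parts. -/
def MConnected (M : Matroid α) : Prop :=
  ∀ A B : Set α, A ∪ B = M.E → Disjoint A B → A.Nonempty → B.Nonempty →
    mrank M A + mrank M B ≠ mrank M M.E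

/-- A building set for a matroid `M`: a set of nonempty flats containing all nonempty
flats whose restriction is connected, and closed under joins of intersecting members. -/
def IsBuildingSet (M : Matroid α) (B : Set (Set α)) : Prop :=
  (∀ X ∈ B, M.IsFlat X ∧ X.Nonempty) ∧
  (∀ X, M.IsFlat X → X.Nonempty → MConnected (M.restrict X) → X ∈ B) ∧
  (∀ X ∈ B, ∀ Y ∈ B, (X ∩ Y).Nonempty → M.closure (X ∪ Y) ∈ B)

/-- A nested set of a building set `B`. -/
def IsNested (M : Matroid α) (B N : Set (Set α)) : Prop :=
  N ⊆ B ∧ maxB B ⊆ N ∧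
  ∀ S : Set (Set α), S ⊆ N → S.Nontrivial → S.Pairwise Incomp →
    M.closure (⋃₀ S) ∉ B

/-- An inclusion-maximal nested set. -/
def IsMaxNested (M : Matroid α) (B N : Set (Set α)) : Prop :=
  IsNested M B N ∧ ∀ N', IsNested M B N' → N ⊆ N' → N' = N

/-- An atom of a matroid: a rank-one flat. -/
def IsAtomFlat (M : Matroid α) (A : Set α) : Prop := M.IsFlat A ∧ mrank M A = 1

/-- Atoms are compared by their least elements. -/
def atomLE [Preorder α] (A A' : Set α) : Prop :=
  ∃ a a', IsLeast A a ∧ IsLeast A' a' ∧ a ≤ a'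

/-- Strict comparison of atoms by their least elements. -/
def atomLT [Preorder α] (A A' : Set α) : Prop :=
  ∃ a a', IsLeast A a ∧ IsLeast A' a' ∧ a < a'

/-- `A` is an admissible label for `X` within the family `S`:
an atom contained in `X` but in no member of `S` properly below `X`. -/
def GoodLabel (M : Matroid α) (S : Set (Set α)) (X A : Set α) : Prop :=
  IsAtomFlat M A ∧ A ⊆ X ∧ ∀ Y ∈ S, Y ⊂ X → ¬ A ⊆ Y

/-- `A` is the label `m_S(X)`: the least admissible label for `X` within `S`. -/
def IsMinLabel [Preorder α] (M : Matroid α) (S : Set (Set α)) (X A : Set α) : Prop :=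
  GoodLabel M S X A ∧ ∀ A', GoodLabel M S X A' → atomLE A A'

/-- `NLListing M N R L` : `L` is the NL-listing of the remaining family `R`
(labels computed with respect to the whole family `N`), obtained by repeatedly
plucking the inclusion-minimal member with least label. -/
inductive NLListing [Preorder α] (M : Matroid α) (N : Set (Set α)) :
    Set (Set α) → List (Set α × Set α) → Prop
  | nil : NLListing M N ∅ []
  | cons {R : Set (Set α)} {X A : Set α} {L : List (Set α × Set α)} :
      X ∈ R →
      (∀ Y ∈ R, Y ⊆ X → Y = X) →
      IsMinLabel M N X A →
      (∀ Y ∈ R, (∀ W ∈ R, W ⊆ Y → W = Y) → ∀ A', IsMinLabel M N Y A' → atomLE A A') →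
      NLListing M N (R \ {X}) L →
      NLListing M N R ((X, A) :: L)

/-- A descent of a list of atoms at position `i`. -/
def HasDescentAt [Preorder α] (L : List (Set α)) (i : ℕ) : Prop :=
  ∃ h : i + 1 < L.length, atomLT (L.get ⟨i + 1, h⟩) (L.get ⟨i, Nat.lt_of_succ_lt h⟩)

/-- The indicator vector of a set. -/
noncomputable def indVec (X : Set α) : α → ℝ := X.indicator 1

/-- `v` is the vertex of the nested set `N` for the weight vector `c`. -/
def IsVertex (M : Matroid α) (B : Set (Set α)) (c : Set α → ℝ) (N : Set (Set α))
    (v : α → ℝ) : Prop :=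
  (∀ X ∈ N, ∑ᶠ a ∈ X, v a = c X) ∧
  ∃ lam mu : Set α → ℝ,
    (∀ X ∈ N \ maxB B, 0 < lam X) ∧
    v = (∑ᶠ X ∈ N \ maxB B, lam X • indVec X) + ∑ᶠ Y ∈ maxB B, mu Y • indVec Y

/-- `c` is cubical: every nested set has a unique vertex. -/
def IsCubical (M : Matroid α) (B : Set (Set α)) (c : Set α → ℝ) : Prop :=
  ∀ N, IsNested M B N → ∃! v, IsVertex M B c N v

/-- Lexicographic comparison of vectors in `ℝ^E`. -/
def lexLt [LinearOrder α] (u v : α → ℝ) : Prop :=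
  ∃ i, u i < v i ∧ ∀ j, j < i → u j = v j

open Classical in
/-- The map `τ_Z`. -/
noncomputable def tau (M : Matroid α) (Z X : Set α) : Set α :=
  if X ⊆ Z then X else M.closure (X ∪ Z) \ Z

/-- `MZ` is the contraction `M ／ Z`. -/
def IsContraction (M MZ : Matroid α) (Z : Set α) : Prop :=
  MZ.E = M.E \ Z ∧
  ∀ I : Set α, MZ.Indep I ↔ I ⊆ M.E \ Z ∧ ∃ J, M.IsBasis J Z ∧ M.Indep (I ∪ J)

section NLProof

private lemma my_closure_flat (M : Matroid α) (X : Set α) : M.IsFlat (M.closure X) := by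
  rw [Matroid.closure_def, Set.sInter_eq_iInter]
  haveI : Nonempty {F // F ∈ {F | M.IsFlat F ∧ X ∩ M.E ⊆ F}} :=
    ⟨⟨M.E, M.ground_isFlat, Set.inter_subset_right⟩⟩
  exact Matroid.IsFlat.iInter fun F => F.2.1

private lemma mrank_bdd [Fintype α] (M : Matroid α) (X : Set α) :
    BddAbove {n : ℕ | ∃ I ⊆ X, M.Indep I ∧ I.ncard = n} := by
  refine ⟨Fintype.card α, ?_⟩
  rintro n ⟨I, hIX, hI, rfl⟩
  calc I.ncard ≤ (Set.univ : Set α).ncard :=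
        Set.ncard_le_ncard (Set.subset_univ I) Set.finite_univ
    _ = Fintype.card α := by simp [Set.ncard_univ, Nat.card_eq_fintype_card]

private lemma mrank_mem [Fintype α] (M : Matroid α) (X : Set α) :
    ∃ I ⊆ X, M.Indep I ∧ I.ncard = mrank M X := by
  have h0 : 0 ∈ {n : ℕ | ∃ I ⊆ X, M.Indep I ∧ I.ncard = n} :=
    ⟨∅, Set.empty_subset _, M.empty_indep, by simp⟩
  exact Nat.sSup_mem ⟨0, h0⟩ (mrank_bdd M X)

private lemma one_le_mrank [Fintype α] {M : Matroid α} {X : Set α} {e : α}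
    (he : e ∈ X) (hi : M.Indep {e}) : 1 ≤ mrank M X :=
  le_csSup (mrank_bdd M X) ⟨{e}, Set.singleton_subset_iff.2 he, hi, Set.ncard_singleton e⟩

private lemma atom_nonempty [Fintype α] {M : Matroid α} {A : Set α}
    (hA : IsAtomFlat M A) : A.Nonempty := by
  obtain ⟨I, hIA, hI, hcard⟩ := mrank_mem M A
  rw [hA.2] at hcard
  have hIne : I.Nonempty := by
    apply Set.nonempty_of_ncard_ne_zero
    simp [hcard]
  obtain ⟨e, he⟩ := hIne
  exact ⟨e, hIA he⟩

private lemma mrank_restrict [Fintype α] (M : Matroid α) {R X : Set α} (hXR : X ⊆ R) :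
    mrank (M.restrict R) X = mrank M X := by
  unfold mrank
  congr 1
  ext n
  constructor
  · rintro ⟨I, hIX, hI, rfl⟩
    exact ⟨I, hIX, (Matroid.restrict_indep_iff.1 hI).1, rfl⟩
  · rintro ⟨I, hIX, hI, rfl⟩
    exact ⟨I, hIX, Matroid.restrict_indep_iff.2 ⟨hI, hIX.trans hXR⟩, rfl⟩

private lemma atom_mem_building [Fintype α] {M : Matroid α} (hM : MLoopless M)
    {B : Set (Set α)} (hB : IsBuildingSet M B) {A : Set α} (hA : IsAtomFlat M A) :
    A ∈ B := by
  apply hB.2.1 A hA.1 (atom_nonempty hA)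
  intro P Q hunion hdisj hP hQ
  have hE : (M.restrict A).E = A := Matroid.restrict_ground_eq
  rw [hE] at hunion
  have hPA : P ⊆ A := hunion ▸ Set.subset_union_left
  have hQA : Q ⊆ A := hunion ▸ Set.subset_union_right
  have hAg : A ⊆ M.E := hA.1.subset_ground
  have h1 : ∀ Y : Set α, Y ⊆ A → Y.Nonempty → 1 ≤ mrank (M.restrict A) Y := by
    rintro Y hYA ⟨e, he⟩
    exact one_le_mrank he (Matroid.restrict_indep_iff.2
      ⟨hM e (hAg (hYA he)), Set.singleton_subset_iff.2 (hYA he)⟩)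
  have hPr := h1 P hPA hP
  have hQr := h1 Q hQA hQ
  have htot : mrank (M.restrict A) (M.restrict A).E = 1 := by
    rw [hE, mrank_restrict M (subset_refl A), hA.2]
  rw [htot]
  omega

private lemma nested_disjoint {M : Matroid α} {B N : Set (Set α)}
    (hB : IsBuildingSet M B) (hN : IsNested M B N) {X Y : Set α}
    (hX : X ∈ N) (hY : Y ∈ N) : X ⊆ Y ∨ Y ⊆ X ∨ X ∩ Y = ∅ := by
  by_contra h
  push_neg at h
  obtain ⟨h1, h2, h3⟩ := h
  have hne : X ≠ Y := by rintro rfl; exact h1 subset_rfl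
  have hpair : ({X, Y} : Set (Set α)) ⊆ N := by
    rintro Z hZ
    rcases hZ with rfl | hZ
    · exact hX
    · rw [Set.mem_singleton_iff] at hZ; subst hZ; exact hY
  have hpw : ({X, Y} : Set (Set α)).Pairwise Incomp := by
    intro a ha b hb hab
    rcases ha with rfl | ha
    · rcases hb with rfl | hb
      · exact absurd rfl hab
      · rw [Set.mem_singleton_iff] at hb; subst hb; exact ⟨h1, h2⟩
    · rw [Set.mem_singleton_iff] at ha; subst ha
      rcases hb with rfl | hb
      · exact ⟨h2, h1⟩
      · rw [Set.mem_singleton_iff] at hb; subst hb; exact absurd rfl hab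
  have hforb := hN.2.2 {X, Y} hpair (Set.nontrivial_pair hne) hpw
  rw [Set.sUnion_pair] at hforb
  exact hforb (hB.2.2 X (hN.1 hX) Y (hN.1 hY) h3)

private lemma exists_max_above [Fintype α] {D : Set (Set α)} {Y : Set α} (hY : Y ∈ D) :
    ∃ Z ∈ D, Y ⊆ Z ∧ ∀ W ∈ D, Z ⊆ W → Z = W := by
  obtain ⟨Z, hZ, hmax⟩ := Set.Finite.exists_maximalFor id {W ∈ D | Y ⊆ W}
    (Set.toFinite _) ⟨Y, hY, subset_rfl⟩
  exact ⟨Z, hZ.1, hZ.2, fun W hW hZW => subset_antisymm hZW (hmax ⟨hW, hZ.2.trans hZW⟩ hZW)⟩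

private lemma nested_no_join [Fintype α] {M : Matroid α} {B N : Set (Set α)}
    (hB : IsBuildingSet M B) (hN : IsNested M B N) {X : Set α} (hX : X ∈ N)
    {D : Set (Set α)} (hD : D ⊆ N) (hDne : D.Nonempty)
    (hdisj : ∀ Y ∈ D, Y ∩ X = ∅)
    (hjoin : M.closure (X ∪ ⋃₀ D) ∈ B) : False := by
  classical
  set Dmax : Set (Set α) := {Y ∈ D | ∀ W ∈ D, Y ⊆ W → Y = W} with hDmaxdef
  have hsub : ∀ Y ∈ D, ∃ Z ∈ Dmax, Y ⊆ Z := by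
    intro Y hY
    obtain ⟨Z, hZ, hYZ, hmax⟩ := exists_max_above hY
    exact ⟨Z, ⟨hZ, hmax⟩, hYZ⟩
  have hUnion : ⋃₀ Dmax = ⋃₀ D := by
    apply subset_antisymm
    · exact Set.sUnion_subset_sUnion (fun Y hY => hY.1)
    · rintro x ⟨Y, hY, hx⟩
      obtain ⟨Z, hZ, hYZ⟩ := hsub Y hY
      exact ⟨Z, hZ, hYZ hx⟩
  have hXne : X.Nonempty := (hB.1 X (hN.1 hX)).2
  have hne : ∀ Y ∈ D, Y.Nonempty := fun Y hY => (hB.1 Y (hN.1 (hD hY))).2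
  obtain ⟨Y₀, hY₀⟩ := hDne
  obtain ⟨Z₀, hZ₀, _⟩ := hsub Y₀ hY₀
  have hXnotin : X ∉ Dmax := by
    intro hXm
    have h := hdisj X hXm.1
    rw [Set.inter_self] at h
    exact hXne.ne_empty h
  have hS : insert X Dmax ⊆ N := by
    rintro Z (rfl | hZ)
    · exact hX
    · exact hD hZ.1
  have hnontriv : (insert X Dmax : Set (Set α)).Nontrivial := by
    refine ⟨X, Set.mem_insert _ _, Z₀, Set.mem_insert_of_mem _ hZ₀, ?_⟩
    intro h
    subst h
    exact hXnotin hZ₀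
  have hincompXZ : ∀ Z ∈ Dmax, Incomp X Z := by
    intro Z hZ
    have hd := hdisj Z hZ.1
    constructor
    · intro hXZ
      obtain ⟨x, hx⟩ := hXne
      exact (Set.eq_empty_iff_forall_notMem.1 hd x) ⟨hXZ hx, hx⟩
    · intro hZX
      obtain ⟨z, hz⟩ := hne Z hZ.1
      exact (Set.eq_empty_iff_forall_notMem.1 hd z) ⟨hz, hZX hz⟩
  have hpw : (insert X Dmax : Set (Set α)).Pairwise Incomp := by
    rintro a (rfl | ha) b (rfl | hb) hab
    · exact absurd rfl hab
    · exact hincompXZ b hb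
    · exact ⟨(hincompXZ a ha).2, (hincompXZ a ha).1⟩
    · constructor
      · intro h; exact hab (ha.2 b hb.1 h)
      · intro h; exact hab (hb.2 a ha.1 h).symm
  have hforb := hN.2.2 _ hS hnontriv hpw
  rw [Set.sUnion_insert, hUnion] at hforb
  exact hforb hjoin

private lemma maxnested_closure_eq [Fintype α] {M : Matroid α} (hM : MLoopless M)
    {B N : Set (Set α)} (hB : IsBuildingSet M B) (hN : IsMaxNested M B N)
    {X A : Set α} (hX : X ∈ N) (hlab : GoodLabel M N X A) :
    X = M.closure (A ∪ ⋃₀ {Y | Y ∈ N ∧ Y ⊂ X}) := by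
  classical
  set C : Set (Set α) := {Y | Y ∈ N ∧ Y ⊂ X} with hCdef
  set F : Set α := M.closure (A ∪ ⋃₀ C) with hFdef
  have hXB : X ∈ B := hN.1.1 hX
  have hXflat : M.IsFlat X := (hB.1 X hXB).1
  have hXE : X ⊆ M.E := hXflat.subset_ground
  have hsubX : A ∪ ⋃₀ C ⊆ X := by
    apply Set.union_subset hlab.2.1
    exact Set.sUnion_subset (fun Y hY => hY.2.subset)
  have hsubE : A ∪ ⋃₀ C ⊆ M.E := hsubX.trans hXE
  have hFX : F ⊆ X := by
    rw [hFdef, ← hXflat.closure]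
    exact M.closure_subset_closure hsubX
  have hFflat : M.IsFlat F := my_closure_flat M _
  have hAF : A ⊆ F := Set.subset_union_left.trans (M.subset_closure _ hsubE)
  have hCF : ∀ Y ∈ C, Y ⊆ F := fun Y hY =>
    ((Set.subset_sUnion_of_mem hY).trans Set.subset_union_right).trans
      (M.subset_closure _ hsubE)
  by_contra hne
  have hFssX : F ⊂ X := hFX.ssubset_of_ne (fun h => hne h.symm)
  have hAB : A ∈ B := atom_mem_building hM hB hlab.1
  have hAne : A.Nonempty := atom_nonempty hlab.1
  obtain ⟨Z, hZmem, hZmax⟩ := Set.Finite.exists_maximalFor id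
    {Z ∈ B | A ⊆ Z ∧ Z ⊆ F} (Set.toFinite _) ⟨A, hAB, subset_rfl, hAF⟩
  obtain ⟨hZB, hAZ, hZF⟩ := hZmem
  have hZE : Z ⊆ M.E := (hB.1 Z hZB).1.subset_ground
  have hZN : Z ∉ N := fun hZN => hlab.2.2 Z hZN (hZF.trans_ssubset hFssX) hAZ
  have htri : ∀ Y ∈ N, Y ⊆ Z ∨ Z ⊆ Y ∨ Y ∩ Z = ∅ := by
    intro Y hY
    rcases nested_disjoint hB hN.1 hY hX with hYX | hXY | hYX
    · rcases eq_or_ne Y X with rfl | hYne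
      · right; left; exact hZF.trans hFssX.subset
      · have hYC : Y ∈ C := ⟨hY, ⟨hYX, fun h => hYne (subset_antisymm hYX h)⟩⟩
        have hYF : Y ⊆ F := hCF Y hYC
        by_cases hint : (Y ∩ Z).Nonempty
        · left
          have hYZE : Y ∪ Z ⊆ M.E := Set.union_subset (hYF.trans (hFX.trans hXE)) hZE
          have hjB : M.closure (Y ∪ Z) ∈ B := hB.2.2 Y (hN.1.1 hY) Z hZB hint
          have hjF : M.closure (Y ∪ Z) ⊆ F := by
            rw [← hFflat.closure]
            exact M.closure_subset_closure (Set.union_subset hYF hZF)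
          have hAj : A ⊆ M.closure (Y ∪ Z) :=
            hAZ.trans (Set.subset_union_right.trans (M.subset_closure _ hYZE))
          have hZeq : id Z = id (M.closure (Y ∪ Z)) := subset_antisymm
            (Set.subset_union_right.trans (M.subset_closure _ hYZE)) (hZmax ⟨hjB, hAj, hjF⟩
            (Set.subset_union_right.trans (M.subset_closure _ hYZE)))
          simp only [id_eq] at hZeq
          have hYsub : Y ⊆ M.closure (Y ∪ Z) :=
            Set.subset_union_left.trans (M.subset_closure _ hYZE)
          rw [hZeq]
          exact hYsub
        · right; right; exact Set.not_nonempty_iff_eq_empty.1 hint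
    · right; left; exact hZF.trans (hFX.trans hXY)
    · right; right
      apply Set.eq_empty_of_subset_empty
      rw [← hYX]
      exact Set.inter_subset_inter_right _ (hZF.trans hFX)
  have hnested : IsNested M B (insert Z N) := by
    refine ⟨?_, fun Y hY => Set.mem_insert_of_mem _ (hN.1.2.1 hY), ?_⟩
    · rintro W (rfl | hW)
      · exact hZB
      · exact hN.1.1 hW
    intro S hS hnontriv hpw hjoin
    by_cases hZS : Z ∈ S
    swap
    · exact hN.1.2.2 S (fun W hW => ((hS hW).resolve_left (fun h => hZS (h ▸ hW))))
        hnontriv hpw hjoin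
    have hS0 : S \ {Z} ⊆ N := by
      rintro W ⟨hW, hWZ⟩
      rcases hS hW with rfl | h
      · exact absurd rfl hWZ
      · exact h
    have hS0ne : (S \ {Z}).Nonempty := by
      obtain ⟨a, ha, b, hb, hab⟩ := hnontriv
      rcases eq_or_ne a Z with rfl | haZ
      · exact ⟨b, hb, fun h => hab (Set.mem_singleton_iff.1 h).symm⟩
      · exact ⟨a, ha, haZ⟩
    set S₁ : Set (Set α) := {Y | Y ∈ S \ {Z} ∧ ¬ Y ⊂ X} with hS₁def
    have hS₁disj : ∀ Y ∈ S₁, Y ∩ X = ∅ := by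
      rintro Y ⟨hYmem, hYX⟩
      have hIZ : Incomp Y Z := hpw hYmem.1 hZS hYmem.2
      rcases nested_disjoint hB hN.1 (hS0 hYmem) hX with h | h | h
      · rcases eq_or_ne Y X with rfl | hne'
        · exact absurd (hZF.trans hFssX.subset) hIZ.2
        · exact absurd ⟨h, fun h' => hne' (subset_antisymm h h')⟩ hYX
      · exact absurd ((hZF.trans hFssX.subset).trans h) hIZ.2
      · exact h
    have hjE : ⋃₀ S ⊆ M.E := by
      apply Set.sUnion_subset
      rintro W hW
      rcases hS hW with rfl | h
      · exact hZE
      · exact (hB.1 W (hN.1.1 h)).1.subset_ground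
    by_cases hS₁ne : S₁.Nonempty
    · have hWB : M.closure (M.closure (⋃₀ S) ∪ X) ∈ B := by
        apply hB.2.2 _ hjoin _ hXB
        obtain ⟨a, ha⟩ := hAne
        have hacl : a ∈ M.closure (⋃₀ S) :=
          ((hAZ.trans (Set.subset_sUnion_of_mem hZS)).trans (M.subset_closure _ hjE)) ha
        exact ⟨a, hacl, hlab.2.1 ha⟩
      have hseteq : X ∪ ⋃₀ S₁ = ⋃₀ S ∪ X := by
        apply subset_antisymm
        · apply Set.union_subset Set.subset_union_right
          exact (Set.sUnion_subset_sUnion (fun Y hY => hY.1.1)).trans Set.subset_union_left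
        · apply Set.union_subset _ Set.subset_union_left
          apply Set.sUnion_subset
          intro W hW
          rcases eq_or_ne W Z with rfl | hWZ
          · exact (hZF.trans hFssX.subset).trans Set.subset_union_left
          · by_cases hWX : W ⊂ X
            · exact hWX.subset.trans Set.subset_union_left
            · exact (Set.subset_sUnion_of_mem
                (⟨⟨hW, hWZ⟩, hWX⟩ : W ∈ S₁)).trans Set.subset_union_right
      apply nested_no_join hB hN.1 hX (fun Y hY => hS0 hY.1) hS₁ne hS₁disj
      rw [hseteq, ← M.closure_union_closure_left_eq]
      exact hWB
    · have hall : ∀ Y ∈ S \ {Z}, Y ⊆ F := by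
        intro Y hY
        by_cases hYX : Y ⊂ X
        · exact hCF Y ⟨hS0 hY, hYX⟩
        · exact absurd ⟨Y, hY, hYX⟩ hS₁ne
      have hjF : M.closure (⋃₀ S) ⊆ F := by
        rw [← hFflat.closure]
        apply M.closure_subset_closure
        apply Set.sUnion_subset
        intro W hW
        rcases eq_or_ne W Z with rfl | hWZ
        · exact hZF
        · exact hall W ⟨hW, hWZ⟩
      have hAj : A ⊆ M.closure (⋃₀ S) :=
        (hAZ.trans (Set.subset_sUnion_of_mem hZS)).trans (M.subset_closure _ hjE)
      have hZj : Z ⊆ M.closure (⋃₀ S) :=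
        (Set.subset_sUnion_of_mem hZS).trans (M.subset_closure _ hjE)
      have hZeq : id Z = id (M.closure (⋃₀ S)) := subset_antisymm hZj (hZmax ⟨hjoin, hAj, hjF⟩ hZj)
      simp only [id_eq] at hZeq
      obtain ⟨Y, hY⟩ := hS0ne
      have hIZ : Incomp Y Z := hpw hY.1 hZS hY.2
      apply hIZ.1
      rw [hZeq]
      exact (Set.subset_sUnion_of_mem hY.1).trans (M.subset_closure _ hjE)
  have hins := hN.2 _ hnested (Set.subset_insert _ _)
  exact hZN (hins ▸ Set.mem_insert Z N)

private lemma head_aux [Fintype α] {M : Matroid α} {B N : Set (Set α)}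
    (hB : IsBuildingSet M B) (hNn : IsNested M B N) {X X' A : Set α}
    {C' D : Set (Set α)}
    (hX : X ∈ N) (hX'B : X' ∈ B)
    (hAX : A ⊆ X)
    (hL' : X' = M.closure (A ∪ ⋃₀ C'))
    (hC'E : A ∪ ⋃₀ C' ⊆ M.E)
    (hDC' : D ⊆ C') (hDN : D ⊆ N) (hDne : D.Nonempty)
    (hrest : ∀ Y ∈ C', Y ∉ D → Y ⊆ X)
    (hdisj : ∀ Y ∈ D, Y ∩ X = ∅)
    (hAne : A.Nonempty) : False := by
  have hXB : X ∈ B := hNn.1 hX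
  have hAX' : A ⊆ X' := hL' ▸ (Set.subset_union_left.trans (M.subset_closure _ hC'E))
  have hinter : (X ∩ X').Nonempty :=
    ⟨hAne.choose, hAX hAne.choose_spec, hAX' hAne.choose_spec⟩
  have hjoinB : M.closure (X ∪ X') ∈ B := hB.2.2 X hXB X' hX'B hinter
  have hseteq : X ∪ (A ∪ ⋃₀ C') = X ∪ ⋃₀ D := by
    apply subset_antisymm
    · apply Set.union_subset Set.subset_union_left
      apply Set.union_subset (hAX.trans Set.subset_union_left)
      apply Set.sUnion_subset
      intro Y hY
      by_cases hYD : Y ∈ D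
      · exact (Set.subset_sUnion_of_mem hYD).trans Set.subset_union_right
      · exact (hrest Y hY hYD).trans Set.subset_union_left
    · apply Set.union_subset Set.subset_union_left
      exact (Set.sUnion_subset_sUnion hDC').trans
        (Set.subset_union_right.trans Set.subset_union_right)
  apply nested_no_join hB hNn hX hDN hDne hdisj
  have heq : M.closure (X ∪ ⋃₀ D) = M.closure (X ∪ X') := by
    rw [hL', M.closure_union_closure_right_eq, hseteq]
  rw [heq]
  exact hjoinB

private lemma head_eq [Fintype α] {M : Matroid α} (hM : MLoopless M)
    {B N N' Q : Set (Set α)} (hB : IsBuildingSet M B)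
    (hN : IsMaxNested M B N) (hN' : IsMaxNested M B N')
    (hQN : Q ⊆ N) (hQN' : Q ⊆ N')
    {X X' A : Set α} (hX : X ∈ N) (hX' : X' ∈ N')
    (hXQ : X ∉ Q) (hX'Q : X' ∉ Q)
    (hCQ : ∀ Y ∈ N, Y ⊂ X → Y ∈ Q) (hCQ' : ∀ Y ∈ N', Y ⊂ X' → Y ∈ Q)
    (hDC : ∀ Y ∈ Q, ∀ Z, (Z ∈ N ∨ Z ∈ N') → Z ⊂ Y → Z ∈ Q)
    (hA : GoodLabel M N X A) (hA' : GoodLabel M N' X' A) : X = X' := by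
  classical
  set C : Set (Set α) := {Y | Y ∈ N ∧ Y ⊂ X} with hCdef
  set C' : Set (Set α) := {Y | Y ∈ N' ∧ Y ⊂ X'} with hC'def
  have hL : X = M.closure (A ∪ ⋃₀ C) := maxnested_closure_eq hM hB hN hX hA
  have hL' : X' = M.closure (A ∪ ⋃₀ C') := maxnested_closure_eq hM hB hN' hX' hA'
  have hCsubQ : C ⊆ Q := fun Y hY => hCQ Y hY.1 hY.2
  have hC'subQ : C' ⊆ Q := fun Y hY => hCQ' Y hY.1 hY.2
  have hAne : A.Nonempty := atom_nonempty hA.1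
  have hXE : X ⊆ M.E := (hB.1 X (hN.1.1 hX)).1.subset_ground
  have hX'E : X' ⊆ M.E := (hB.1 X' (hN'.1.1 hX')).1.subset_ground
  have hCE : A ∪ ⋃₀ C ⊆ M.E :=
    Set.union_subset (hA.2.1.trans hXE)
      (Set.sUnion_subset (fun Y hY => hY.2.subset.trans hXE))
  have hC'E : A ∪ ⋃₀ C' ⊆ M.E :=
    Set.union_subset (hA'.2.1.trans hX'E)
      (Set.sUnion_subset (fun Y hY => hY.2.subset.trans hX'E))
  have htriQ : ∀ Y ∈ Q, Y ⊂ X ∨ Y ∩ X = ∅ := by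
    intro Y hY
    rcases nested_disjoint hB hN.1 (hQN hY) hX with h | h | h
    · rcases eq_or_ne Y X with rfl | hne
      · exact absurd hY hXQ
      · exact Or.inl ⟨h, fun h' => hne (subset_antisymm h h')⟩
    · rcases eq_or_ne X Y with rfl | hne
      · exact absurd hY hXQ
      · exact absurd (hDC Y hY X (Or.inl hX) ⟨h, fun h' => hne (subset_antisymm h h')⟩) hXQ
    · exact Or.inr h
  have htriQ' : ∀ Y ∈ Q, Y ⊂ X' ∨ Y ∩ X' = ∅ := by
    intro Y hY
    rcases nested_disjoint hB hN'.1 (hQN' hY) hX' with h | h | h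
    · rcases eq_or_ne Y X' with rfl | hne
      · exact absurd hY hX'Q
      · exact Or.inl ⟨h, fun h' => hne (subset_antisymm h h')⟩
    · rcases eq_or_ne X' Y with rfl | hne
      · exact absurd hY hX'Q
      · exact absurd (hDC Y hY X' (Or.inr hX') ⟨h, fun h' => hne (subset_antisymm h h')⟩) hX'Q
    · exact Or.inr h
  by_cases hCC' : C = C'
  · rw [hL, hL', hCC']
  exfalso
  by_cases hD1 : ({Y | Y ∈ C' ∧ Y ∉ C} : Set (Set α)).Nonempty
  · refine head_aux hB hN.1 hX (hN'.1.1 hX') hA.2.1 hL' hC'E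
      (fun Y hY => hY.1) (fun Y hY => hQN (hC'subQ hY.1)) hD1 ?_ ?_ hAne
    · intro Y hY hYD
      by_cases hYC : Y ∈ C
      · exact hYC.2.subset
      · exact absurd ⟨hY, hYC⟩ hYD
    · rintro Y ⟨hYC', hYC⟩
      rcases htriQ Y (hC'subQ hYC') with h | h
      · exact absurd ⟨hQN (hC'subQ hYC'), h⟩ hYC
      · exact h
  · have hD2 : ({Y | Y ∈ C ∧ Y ∉ C'} : Set (Set α)).Nonempty := by
      by_contra hD2
      apply hCC'
      ext Y
      constructor
      · intro hY
        by_contra hYC'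
        exact hD2 ⟨Y, hY, hYC'⟩
      · intro hY
        by_contra hYC
        exact hD1 ⟨Y, hY, hYC⟩
    refine head_aux hB hN'.1 hX' (hN.1.1 hX) hA'.2.1 hL hCE
      (fun Y hY => hY.1) (fun Y hY => hQN' (hCsubQ hY.1)) hD2 ?_ ?_ hAne
    · intro Y hY hYD
      by_cases hYC' : Y ∈ C'
      · exact hYC'.2.subset
      · exact absurd ⟨hY, hYC'⟩ hYD
    · rintro Y ⟨hYC, hYC'⟩
      rcases htriQ' Y (hCsubQ hYC) with h | h
      · exact absurd ⟨hQN' (hCsubQ hYC), h⟩ hYC'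
      · exact h

private lemma rec_lemma [Fintype α] [LinearOrder α] {M : Matroid α} (hM : MLoopless M)
    {B N N' : Set (Set α)} (hB : IsBuildingSet M B)
    (hN : IsMaxNested M B N) (hN' : IsMaxNested M B N')
    {R : Set (Set α)} {LP : List (Set α × Set α)}
    (hP : NLListing M N R LP) :
    ∀ Q R' LP', Q ⊆ N → Q ⊆ N' →
      (∀ Y ∈ Q, ∀ Z, (Z ∈ N ∨ Z ∈ N') → Z ⊂ Y → Z ∈ Q) →
      R = N \ Q → R' = N' \ Q →
      NLListing M N' R' LP' →
      LP.map Prod.snd = LP'.map Prod.snd →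
      R = R' := by
  induction hP with
  | nil =>
    intro Q R' LP' _ _ _ _ hR' hP' hlab
    have hLP' : LP' = [] := by
      cases LP'
      · rfl
      · simp at hlab
    subst hLP'
    cases hP'
    rfl
  | @cons R X A L hXR hmin hlabX hrule htail ih =>
    intro Q R' LP' hQN hQN' hDC hR hR' hP' hlab
    obtain ⟨X', A', L', rfl⟩ : ∃ X' A' L', LP' = (X', A') :: L' := by
      cases LP' with
      | nil => simp at hlab
      | cons p L' => exact ⟨p.1, p.2, L', by simp⟩
    cases hP' with
    | cons hX'R' hmin' hlabX' hrule' htail' =>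
      have hAA' : A = A' := by
        simp only [List.map_cons, List.cons.injEq] at hlab
        exact hlab.1
      have hlabtail : L.map Prod.snd = L'.map Prod.snd := by
        simp only [List.map_cons, List.cons.injEq] at hlab
        exact hlab.2
      have hXN : X ∈ N := by rw [hR] at hXR; exact hXR.1
      have hXQ : X ∉ Q := by rw [hR] at hXR; exact hXR.2
      have hX'N' : X' ∈ N' := by rw [hR'] at hX'R'; exact hX'R'.1
      have hX'Q : X' ∉ Q := by rw [hR'] at hX'R'; exact hX'R'.2
      have hCQ : ∀ Y ∈ N, Y ⊂ X → Y ∈ Q := by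
        intro Y hY hYX
        by_contra hYQ
        have hYR : Y ∈ R := by rw [hR]; exact ⟨hY, hYQ⟩
        exact hYX.ne (hmin Y hYR hYX.subset)
      have hCQ' : ∀ Y ∈ N', Y ⊂ X' → Y ∈ Q := by
        intro Y hY hYX
        by_contra hYQ
        have hYR : Y ∈ R' := by rw [hR']; exact ⟨hY, hYQ⟩
        exact hYX.ne (hmin' Y hYR hYX.subset)
      have hXX' : X = X' := by
        apply head_eq hM hB hN hN' hQN hQN' hXN hX'N' hXQ hX'Q hCQ hCQ' hDC hlabX.1
        rw [hAA']
        exact hlabX'.1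
      have hstep := ih (insert X Q) (R' \ {X'}) L'
        (Set.insert_subset hXN hQN)
        (Set.insert_subset (hXX' ▸ hX'N') hQN')
        ?_ ?_ ?_ htail' hlabtail
      · ext Y
        constructor
        · intro hY
          rcases eq_or_ne Y X with rfl | hYX
          · exact hXX' ▸ hX'R'
          · have hmem : Y ∈ R' \ {X'} := hstep ▸ (⟨hY, hYX⟩ : Y ∈ R \ {X})
            exact hmem.1
        · intro hY
          rcases eq_or_ne Y X' with rfl | hYX
          · exact hXX' ▸ hXR
          · have hmem : Y ∈ R \ {X} := hstep ▸ (⟨hY, hYX⟩ : Y ∈ R' \ {X'})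
            exact hmem.1
      · rintro Y hYQ Z hZ hZY
        rcases hYQ with rfl | hYQ
        · rcases hZ with hZN | hZN'
          · exact Set.mem_insert_of_mem _ (hCQ Z hZN hZY)
          · exact Set.mem_insert_of_mem _ (hCQ' Z hZN' (hXX' ▸ hZY))
        · exact Set.mem_insert_of_mem _ (hDC Y hYQ Z hZ hZY)
      · rw [hR]
        ext Y
        simp only [Set.mem_diff, Set.mem_singleton_iff, Set.mem_insert_iff]
        tauto
      · rw [hR', hXX']
        ext Y
        simp only [Set.mem_diff, Set.mem_singleton_iff, Set.mem_insert_iff]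
        tauto

end NLProof

/-- an inclusion-maximal nested set is determined by its NL-labeling. -/
theorem nl_labeling_determines {α : Type*} [Fintype α] [LinearOrder α]
    (M : Matroid α) (hM : MLoopless M)
    (B : Set (Set α)) (hB : IsBuildingSet M B)
    (N N' : Set (Set α)) (hN : IsMaxNested M B N) (hN' : IsMaxNested M B N')
    (P P' : List (Set α × Set α))
    (hP : NLListing M N N P) (hP' : NLListing M N' N' P')
    (hlab : P.map Prod.snd = P'.map Prod.snd) :
    N = N' := by
  have h := rec_lemma hM hB hN hN' hP ∅ N' P'
    (Set.empty_subset _) (Set.empty_subset _)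
    (fun Y hY => absurd hY (Set.notMem_empty Y))
    (Set.diff_empty).symm (Set.diff_empty).symm hP' hlab
  exact h
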